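/- The number of hyposylvester classes of m-permutations of n is (m+1)^{n-1}. -/

import Mathlib

/-!
For a word `w` and a letter `a`, count the letters `a + 1` after the last `a`. No hyposylvester
move changes this number: a move of the first kind swaps two letters that differ by at least `2`,
and a move of the second kind swaps `a < b` only while another `a` follows. Conversely, in an
`m`-permutation of `k + 2` every copy of the top letter `k + 1` can be pushed to an end of the word
(leftwards if it stands before the last `k`, rightwards otherwise), so by induction on the alphabet
every `m`-permutation is congruent to a canonical word determined by these `n - 1` counts, each of
which ranges over `0, …, m`.
-/

/-- One elementary hyposylvester rewriting. -/
def HypoStep {α : Type*} [LinearOrder α] (w w' : List α) : Prop :=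
  (∃ (u v : List α) (a c : α), a < c ∧
      (∃ b ∈ u ++ [a, c] ++ v, a < b ∧ b < c) ∧
      w = u ++ [a, c] ++ v ∧ w' = u ++ [c, a] ++ v) ∨
  (∃ (u v x : List α) (a b : α), a < b ∧
      w = u ++ [a, b] ++ v ++ [a] ++ x ∧ w' = u ++ [b, a] ++ v ++ [a] ++ x)

open List Relation

theorem Relation.EqvGen.map_of_rel {α β : Type*} {r : α → α → Prop} {s : β → β → Prop}
    {f : α → β} (hf : ∀ ⦃x y⦄, r x y → s (f x) (f y)) {x y : α} (h : EqvGen r x y) :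
    EqvGen s (f x) (f y) :=
  Quot.eqvGen_exact (congrArg (Quot.map f hf) (Quot.eqvGen_sound h))

namespace HypoStep

variable {α : Type*} [LinearOrder α] {w w' : List α}

theorem of_between {u z : List α} {a b c : α} (hab : a < b) (hbc : b < c) (hb : b ∈ u ++ z) :
    HypoStep (u ++ a :: c :: z) (u ++ c :: a :: z) :=
  Or.inl ⟨u, z, a, c, hab.trans hbc,
    ⟨b, by simp only [mem_append, mem_cons] at hb ⊢; tauto, hab, hbc⟩, by simp, by simp⟩

theorem of_mem_right {u z : List α} {a c : α} (hac : a < c) (ha : a ∈ z) :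
    HypoStep (u ++ a :: c :: z) (u ++ c :: a :: z) := by
  obtain ⟨v, x, rfl⟩ := append_of_mem ha
  exact Or.inr ⟨u, v, x, a, c, hac, by simp, by simp⟩

theorem append_append (h : HypoStep w w') (p s : List α) :
    HypoStep (p ++ w ++ s) (p ++ w' ++ s) := by
  rcases h with ⟨u, v, a, c, hac, ⟨b, hb, hab, hbc⟩, rfl, rfl⟩ |
    ⟨u, v, x, a, b, hab, rfl, rfl⟩
  · refine Or.inl ⟨p ++ u, v ++ s, a, c, hac, ⟨b, ?_, hab, hbc⟩, by simp, by simp⟩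
    simp only [mem_append] at hb ⊢
    tauto
  · exact Or.inr ⟨p ++ u, v, x ++ s, a, b, hab, by simp, by simp⟩

theorem perm (h : HypoStep w w') : w ~ w' := by
  rcases h with ⟨u, v, a, c, -, -, rfl, rfl⟩ | ⟨u, v, x, a, b, -, rfl, rfl⟩
  · simpa using ((Perm.swap c a v).append_left u)
  · simpa using ((Perm.swap b a (v ++ a :: x)).append_left u)

theorem map {β : Type*} [LinearOrder β] {g : α → β} {s : Set α} (hg : StrictMonoOn g s)
    (hw : ∀ a ∈ w, a ∈ s) (h : HypoStep w w') : HypoStep (w.map g) (w'.map g) := by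
  rcases h with ⟨u, v, a, c, hac, ⟨b, hb, hab, hbc⟩, rfl, rfl⟩ |
    ⟨u, v, x, a, b, hab, rfl, rfl⟩
  · have hs : ∀ y ∈ u ++ [a, c] ++ v, y ∈ s := hw
    refine Or.inl ⟨u.map g, v.map g, g a, g c, hg (hs a (by simp)) (hs c (by simp)) hac,
      ⟨g b, ?_, hg (hs a (by simp)) (hs b hb) hab, hg (hs b hb) (hs c (by simp)) hbc⟩,
      by simp, by simp⟩
    simpa using mem_map_of_mem (f := g) hb
  · exact Or.inr ⟨u.map g, v.map g, x.map g, g a, g b, hg (hw a (by simp)) (hw b (by simp)) hab,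
      by simp, by simp⟩

end HypoStep

namespace Relation.EqvGen

variable {α : Type*} [LinearOrder α] {w w' : List α}

theorem hypoStep_append_append (h : EqvGen HypoStep w w') (p s : List α) :
    EqvGen HypoStep (p ++ w ++ s) (p ++ w' ++ s) :=
  h.map_of_rel fun _ _ hxy => hxy.append_append p s

theorem hypoStep_perm (h : EqvGen HypoStep w w') : w ~ w' :=
  (Equivalence.eqvGen_iff (Perm.eqv α)).1 (EqvGen.mono (fun _ _ => HypoStep.perm) _ _ h)

theorem hypoStep_map {β : Type*} [LinearOrder β] {g : α → β} {s : Set α}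
    (hg : StrictMonoOn g s) (h : EqvGen HypoStep w w') (hw : ∀ a ∈ w, a ∈ s) :
    EqvGen HypoStep (w.map g) (w'.map g) := by
  induction h with
  | rel _ _ h => exact .rel _ _ (h.map hg hw)
  | refl => exact .refl _
  | symm _ _ h ih => exact .symm _ _ (ih fun a ha => hw a (h.hypoStep_perm.mem_iff.1 ha))
  | trans _ _ _ h _ ih₁ ih₂ =>
    exact .trans _ _ _ (ih₁ hw) (ih₂ fun a ha => hw a (h.hypoStep_perm.mem_iff.2 ha))

theorem hypoStep_move_right {x : α} {u l z : List α}
    (h : ∀ y ∈ l, ∀ u' z' : List α, EqvGen HypoStep (u ++ u' ++ x :: y :: z' ++ z)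
      (u ++ u' ++ y :: x :: z' ++ z)) :
    EqvGen HypoStep (u ++ x :: l ++ z) (u ++ l ++ x :: z) := by
  induction l generalizing u with
  | nil => simpa using EqvGen.refl _
  | cons y l ih =>
    have hmove := ih (u := u ++ [y]) fun y' hy' u' z' => by
      simpa using h y' (mem_cons_of_mem _ hy') (y :: u') z'
    exact .trans _ _ _ (by simpa using h y mem_cons_self [] l) (by simpa using hmove)

end Relation.EqvGen

theorem eqvGen_hypoStep_map_iff {α β : Type*} [LinearOrder α] [LinearOrder β] (f : α ↪o β)
    {w w' : List α} : EqvGen HypoStep (w.map f) (w'.map f) ↔ EqvGen HypoStep w w' := by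
  refine ⟨fun h => ?_, fun h =>
    h.hypoStep_map (f.strictMono.strictMonoOn Set.univ) fun _ _ => trivial⟩
  cases isEmpty_or_nonempty α
  · obtain rfl : w = [] := eq_nil_iff_forall_not_mem.2 fun a => isEmptyElim a
    obtain rfl : w' = [] := eq_nil_iff_forall_not_mem.2 fun a => isEmptyElim a
    exact EqvGen.refl _
  have hg : StrictMonoOn (Function.invFun f) (Set.range f) := by
    rintro _ ⟨a, rfl⟩ _ ⟨b, rfl⟩ hab
    simpa [Function.leftInverse_invFun f.injective _] using hab
  have := h.hypoStep_map hg (by simp)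
  rwa [List.map_map, List.map_map, (Function.leftInverse_invFun f.injective).comp_eq_id, map_id,
    map_id] at this

section SuffixAfterLast

variable {α : Type*} [DecidableEq α]

/-- The part of `w` after the last occurrence of `a` (all of `w` if `a ∉ w`). -/
def suffixAfterLast (a : α) (w : List α) : List α :=
  (w.reverse.takeWhile (· ≠ a)).reverse

theorem suffixAfterLast_isSuffix (a : α) (w : List α) : suffixAfterLast a w <:+ w := by
  simpa [suffixAfterLast] using (takeWhile_prefix (l := w.reverse) (· ≠ a)).reverse

theorem suffixAfterLast_append_of_mem {a : α} (u : List α) {z : List α} (ha : a ∈ z) :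
    suffixAfterLast a (u ++ z) = suffixAfterLast a z := by
  unfold suffixAfterLast
  rw [reverse_append, takeWhile_append, if_neg]
  intro hlen
  have hall := takeWhile_eq_self_iff.1 ((takeWhile_prefix _).eq_of_length hlen)
  simpa using hall a (mem_reverse.2 ha)

theorem suffixAfterLast_append_of_not_mem {a : α} (u : List α) {z : List α} (ha : a ∉ z) :
    suffixAfterLast a (u ++ z) = suffixAfterLast a u ++ z := by
  unfold suffixAfterLast
  rw [reverse_append, takeWhile_append_of_pos]
  · simp
  · intro x hx
    simpa using ne_of_mem_of_not_mem (mem_reverse.1 hx) ha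

theorem suffixAfterLast_append_cons_of_not_mem {a : α} (u : List α) {z : List α} (ha : a ∉ z) :
    suffixAfterLast a (u ++ a :: z) = z := by
  rw [← singleton_append, ← append_assoc, suffixAfterLast_append_of_not_mem _ ha,
    suffixAfterLast_append_of_mem _ (mem_singleton_self a)]
  simp [suffixAfterLast]

theorem suffixAfterLast_filter {p : α → Bool} {a : α} (hp : p a) (w : List α) :
    suffixAfterLast a (w.filter p) = (suffixAfterLast a w).filter p := by
  unfold suffixAfterLast
  rw [← filter_reverse, takeWhile_filter, filter_reverse]
  congr 3
  funext x
  by_cases hx : x = a <;> simp [hx, hp]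

end SuffixAfterLast

def countSuccAfterLast (a : ℕ) (w : List ℕ) : ℕ :=
  (suffixAfterLast a w).count (a + 1)

theorem countSuccAfterLast_le_count (a : ℕ) (w : List ℕ) :
    countSuccAfterLast a w ≤ w.count (a + 1) :=
  (suffixAfterLast_isSuffix a w).sublist.count_le _

theorem countSuccAfterLast_append_append {a : ℕ} (u : List ℕ) {w z : List ℕ} (hw : a ∈ w)
    (hz : a ∉ z) :
    countSuccAfterLast a (u ++ w ++ z) = countSuccAfterLast a w + z.count (a + 1) := by
  rw [countSuccAfterLast, suffixAfterLast_append_of_not_mem _ hz,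
    suffixAfterLast_append_of_mem _ hw, count_append, countSuccAfterLast]

theorem countSuccAfterLast_filter_ne {a q : ℕ} (ha : a ≠ q) (ha' : a + 1 ≠ q) (w : List ℕ) :
    countSuccAfterLast a (w.filter (· ≠ q)) = countSuccAfterLast a w := by
  rw [countSuccAfterLast, suffixAfterLast_filter (by simpa using ha),
    count_filter (by simpa using ha'), countSuccAfterLast]

theorem countSuccAfterLast_swap {u z : List ℕ} {x y : ℕ} (hxy : x < y)
    (h : y ≠ x + 1 ∨ x ∈ z) (a : ℕ) :
    countSuccAfterLast a (u ++ x :: y :: z) = countSuccAfterLast a (u ++ y :: x :: z) := by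
  unfold countSuccAfterLast
  rw [show u ++ x :: y :: z = u ++ [x, y] ++ z by simp,
    show u ++ y :: x :: z = u ++ [y, x] ++ z by simp]
  by_cases ha : a ∈ z
  · rw [suffixAfterLast_append_of_mem _ ha, suffixAfterLast_append_of_mem _ ha]
  rw [suffixAfterLast_append_of_not_mem _ ha, suffixAfterLast_append_of_not_mem _ ha,
    count_append, count_append]
  congr 1
  by_cases hx : x = a
  · subst hx
    simp [suffixAfterLast, hxy.ne', show y ≠ x + 1 by tauto]
  by_cases hy : y = a
  · subst hy
    simp [suffixAfterLast, hxy.ne, show x ≠ y + 1 by omega]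
  · simp [suffixAfterLast, hx, hy, count_cons]
    omega

theorem HypoStep.countSuccAfterLast_eq {w w' : List ℕ} (h : HypoStep w w') (a : ℕ) :
    countSuccAfterLast a w = countSuccAfterLast a w' := by
  rcases h with ⟨u, v, x, y, hxy, ⟨b, -, hxb, hby⟩, rfl, rfl⟩ |
    ⟨u, v, t, x, y, hxy, rfl, rfl⟩
  · simpa using countSuccAfterLast_swap (u := u) (z := v) hxy (.inl (by omega)) a
  · simpa using countSuccAfterLast_swap (u := u) (z := v ++ x :: t) hxy (.inr (by simp)) a

theorem Relation.EqvGen.countSuccAfterLast_eq {w w' : List ℕ} (h : EqvGen HypoStep w w')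
    (a : ℕ) : countSuccAfterLast a w = countSuccAfterLast a w' :=
  congrArg (Quot.lift _ fun _ _ hxy => hxy.countSuccAfterLast_eq a) (Quot.eqvGen_sound h)

section TopLetter

variable {k : ℕ}

theorem hypoStep_swap_succ_of_lt {u z : List ℕ} {x : ℕ} (hx : x < k) (hk : k ∈ u ++ z) :
    HypoStep (u ++ x :: (k + 1) :: z) (u ++ (k + 1) :: x :: z) :=
  HypoStep.of_between hx k.lt_succ_self hk

theorem hypoStep_swap_succ_of_le {u z : List ℕ} {x : ℕ} (hx : x ≤ k) (hk : k ∈ z) :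
    HypoStep (u ++ x :: (k + 1) :: z) (u ++ (k + 1) :: x :: z) := by
  rcases hx.lt_or_eq with hx | rfl
  · exact hypoStep_swap_succ_of_lt hx (mem_append_right u hk)
  · exact HypoStep.of_mem_right x.lt_succ_self hk

theorem eqvGen_push_succ_right {u s : List ℕ} (hk : k ∈ u)
    (hs : ∀ x ∈ s, x < k ∨ x = k + 1) : EqvGen HypoStep (u ++ s)
      (u ++ s.filter (· ≠ k + 1) ++ replicate (s.count (k + 1)) (k + 1)) := by
  induction s generalizing u with
  | nil => simpa using EqvGen.refl _
  | cons x s ih =>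
    have hpushed := ih (u := u ++ [x]) (by simp [hk]) fun y hy => hs y (mem_cons_of_mem _ hy)
    rcases hs x mem_cons_self with hx | rfl
    · simpa [filter_cons, show x ≠ k + 1 by omega, count_cons] using hpushed
    have hmove : EqvGen HypoStep
        (u ++ (k + 1) :: s.filter (· ≠ k + 1) ++ replicate (s.count (k + 1)) (k + 1))
        (u ++ s.filter (· ≠ k + 1) ++ (k + 1) :: replicate (s.count (k + 1)) (k + 1)) := by
      refine EqvGen.hypoStep_move_right fun y hy u' z' => .symm _ _ (.rel _ _ ?_)
      have hy' : y < k := by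
        simp only [mem_filter, decide_eq_true_eq] at hy
        have := hs y (mem_cons_of_mem _ hy.1)
        omega
      simpa using hypoStep_swap_succ_of_lt (u := u ++ u') hy' (by simp [hk])
    exact .trans _ _ _ (by simpa using hpushed) (by simpa [replicate_succ] using hmove)

theorem eqvGen_push_succ_left {p z : List ℕ} (hk : k ∈ z) (hp : ∀ x ∈ p, x ≤ k + 1) :
    EqvGen HypoStep (p ++ z)
      (replicate (p.count (k + 1)) (k + 1) ++ p.filter (· ≠ k + 1) ++ z) := by
  induction p with
  | nil => simpa using EqvGen.refl _
  | cons x p ih =>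
    have hpushed := (ih fun y hy => hp y (mem_cons_of_mem _ hy)).hypoStep_append_append [x] []
    rcases (hp x mem_cons_self).lt_or_eq with hx | rfl
    · have hmove := EqvGen.hypoStep_move_right (u := []) (x := x)
          (l := replicate (p.count (k + 1)) (k + 1)) (z := p.filter (· ≠ k + 1) ++ z)
          fun y hy u' z' => .rel _ _ <| by
            rw [eq_of_mem_replicate hy]
            simpa using hypoStep_swap_succ_of_le (u := u') (Nat.le_of_lt_succ hx) (by simp [hk])
      exact .trans _ _ _ (by simpa using hpushed) (by simpa [hx.ne, count_cons] using hmove)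
    · simpa [replicate_succ] using hpushed

theorem eqvGen_push_succ_to_ends {w : List ℕ} (hw : ∀ x ∈ w, x ≤ k + 1) (hk : k ∈ w) :
    EqvGen HypoStep w (replicate (w.count (k + 1) - countSuccAfterLast k w) (k + 1) ++
      w.filter (· ≠ k + 1) ++ replicate (countSuccAfterLast k w) (k + 1)) := by
  obtain ⟨s, p, hsp, hks⟩ := eq_append_cons_of_mem (mem_reverse.2 hk)
  rw [reverse_eq_iff, reverse_append, reverse_cons, append_assoc, singleton_append] at hsp
  subst hsp
  have hks' : k ∉ s.reverse := by simpa using hks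
  have hleft := eqvGen_push_succ_left (z := k :: s.reverse) mem_cons_self (p := p.reverse)
    fun x hx => hw x (by simp_all)
  have hright := eqvGen_push_succ_right (k := k)
    (u := replicate (p.reverse.count (k + 1)) (k + 1) ++ p.reverse.filter (· ≠ k + 1) ++ [k])
    (s := s.reverse) (mem_append_right _ (mem_singleton_self k)) fun x hx => by
      have := hw x (by simp_all)
      have : x ≠ k := ne_of_mem_of_not_mem hx hks'
      omega
  rw [countSuccAfterLast, suffixAfterLast_append_cons_of_not_mem _ hks']
  refine .trans _ _ _ hleft (by simpa [filter_append, count_append, count_cons] using hright)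

end TopLetter

def IsMPermutation (m k : ℕ) (w : List ℕ) : Prop :=
  (∀ x ∈ w, x < k) ∧ ∀ t < k, w.count t = m

/-- `canonicalWord m v (k + 1) = k^(m - v (k-1)) ⋯ 1^(m - v 0) 0^m 1^(v 0) ⋯ k^(v (k-1))`. -/
def canonicalWord (m : ℕ) (v : ℕ → ℕ) : ℕ → List ℕ
  | 0 => []
  | 1 => replicate m 0
  | k + 2 => replicate (m - v k) (k + 1) ++ canonicalWord m v (k + 1) ++ replicate (v k) (k + 1)

section CanonicalWord

variable {m : ℕ} {v : ℕ → ℕ}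

theorem lt_of_mem_canonicalWord : ∀ {k x : ℕ}, x ∈ canonicalWord m v k → x < k
  | 0, x, hx => by simp [canonicalWord] at hx
  | 1, x, hx => by simp_all [canonicalWord]
  | k + 2, x, hx => by
    simp only [canonicalWord, mem_append, mem_replicate] at hx
    rcases hx with (⟨-, rfl⟩ | hx) | ⟨-, rfl⟩
    · omega
    · exact (lt_of_mem_canonicalWord hx).trans k.succ.lt_succ_self
    · omega

theorem count_canonicalWord (hv : ∀ t, v t ≤ m) :
    ∀ {k t : ℕ}, t < k → (canonicalWord m v k).count t = m
  | 1, t, ht => by simp [canonicalWord, show t = 0 by omega]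
  | k + 2, t, ht => by
    have hnot : k + 1 ∉ canonicalWord m v (k + 1) := fun h => (lt_of_mem_canonicalWord h).false
    simp only [canonicalWord, count_append, count_replicate, beq_iff_eq]
    rcases (Nat.lt_succ_iff.1 ht).lt_or_eq with ht | rfl
    · simp [count_canonicalWord hv ht, show k + 1 ≠ t by omega]
    · have := hv k
      simp [count_eq_zero.2 hnot]
      omega

theorem isMPermutation_canonicalWord (hv : ∀ t, v t ≤ m) (k : ℕ) :
    IsMPermutation m k (canonicalWord m v k) :=
  ⟨fun _ => lt_of_mem_canonicalWord, fun _ => count_canonicalWord hv⟩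

theorem countSuccAfterLast_canonicalWord (hm : 1 ≤ m) (hv : ∀ t, v t ≤ m) :
    ∀ {k t : ℕ}, t + 1 < k → countSuccAfterLast t (canonicalWord m v k) = v t
  | k + 2, t, ht => by
    have hmem : t ∈ canonicalWord m v (k + 1) :=
      count_pos_iff.1 (by rw [count_canonicalWord hv (by omega)]; omega)
    rw [canonicalWord, countSuccAfterLast_append_append _ hmem (by simp; omega), count_replicate]
    rcases (Nat.lt_succ_iff.1 (Nat.succ_lt_succ_iff.1 ht)).lt_or_eq with ht | rfl
    · rw [countSuccAfterLast_canonicalWord hm hv (by omega), if_neg (by simp; omega)]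
      simp
    · have hzero : countSuccAfterLast t (canonicalWord m v (t + 1)) = 0 :=
        Nat.eq_zero_of_le_zero <| (countSuccAfterLast_le_count _ _).trans_eq
          (count_eq_zero.2 fun h => (lt_of_mem_canonicalWord h).false)
      simp [hzero]

theorem eqvGen_canonicalWord (hm : 1 ≤ m) : ∀ {k : ℕ} {w : List ℕ}, IsMPermutation m k w →
    (∀ t, t + 1 < k → countSuccAfterLast t w = v t) → EqvGen HypoStep w (canonicalWord m v k)
  | 0, w, hw, _ => by
    obtain rfl : w = [] := eq_nil_iff_forall_not_mem.2 fun x hx => Nat.not_lt_zero x (hw.1 x hx)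
    exact .refl _
  | 1, w, hw, _ => by
    have hw0 : ∀ x ∈ w, x = 0 := fun x hx => Nat.lt_one_iff.1 (hw.1 x hx)
    obtain rfl : w = replicate m 0 := eq_replicate_iff.2
      ⟨by rw [← hw.2 0 one_pos, count_eq_length.2 fun x hx => (hw0 x hx).symm], hw0⟩
    exact .refl _
  | k + 2, w, hw, hv => by
    have hk : k ∈ w := count_pos_iff.1 ((hw.2 k (by omega)).symm ▸ hm)
    have hextract := eqvGen_push_succ_to_ends (fun x hx => Nat.le_of_lt_succ (hw.1 x hx)) hk
    rw [hw.2 (k + 1) (by omega), hv k (by omega)] at hextract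
    have hfilter : IsMPermutation m (k + 1) (w.filter (· ≠ k + 1)) := by
      refine ⟨fun x hx => ?_, fun t ht => ?_⟩
      · simp only [mem_filter, decide_eq_true_eq] at hx
        have := hw.1 x hx.1
        omega
      · rw [count_filter (by simpa using ht.ne)]
        exact hw.2 t (by omega)
    have hrest := eqvGen_canonicalWord hm hfilter fun t ht => by
      rw [countSuccAfterLast_filter_ne (by omega) (by omega)]
      exact hv t (by omega)
    exact .trans _ _ _ hextract (hrest.hypoStep_append_append _ _)

end CanonicalWord

section FinAlphabet

variable {m n : ℕ}

theorem isMPermutation_map_val {w : List (Fin n)} (hw : ∀ k, w.count k = m) :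
    IsMPermutation m n (w.map Fin.val) := by
  refine ⟨fun x hx => ?_, fun t ht => ?_⟩
  · obtain ⟨y, -, rfl⟩ := mem_map.1 hx
    exact y.isLt
  · rw [← hw ⟨t, ht⟩]
    exact count_map_of_injective w _ Fin.val_injective ⟨t, ht⟩

def succCountsAfterLast (w : {w : List (Fin n) // ∀ k, w.count k = m}) :
    Fin (n - 1) → Fin (m + 1) := fun i =>
  ⟨countSuccAfterLast i (w.1.map Fin.val), Nat.lt_succ_of_le <|
    (countSuccAfterLast_le_count _ _).trans_eq ((isMPermutation_map_val w.2).2 _ (by omega))⟩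

theorem eqvGen_hypoStep_iff_succCountsAfterLast_eq (hm : 1 ≤ m)
    (w w' : {w : List (Fin n) // ∀ k, w.count k = m}) :
    EqvGen HypoStep w.1 w'.1 ↔ succCountsAfterLast w = succCountsAfterLast w' := by
  rw [← eqvGen_hypoStep_map_iff (Fin.valOrderEmb n)]
  refine ⟨fun h => funext fun i => Fin.ext (h.countSuccAfterLast_eq i), fun h => ?_⟩
  have hw := eqvGen_canonicalWord hm (isMPermutation_map_val w.2)
    (v := fun t => countSuccAfterLast t (w.1.map Fin.val)) fun _ _ => rfl
  have hw' := eqvGen_canonicalWord hm (isMPermutation_map_val w'.2)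
    (v := fun t => countSuccAfterLast t (w.1.map Fin.val)) fun t ht =>
      congrArg Fin.val (congrFun h ⟨t, by omega⟩).symm
  exact .trans _ _ _ hw (.symm _ _ hw')

theorem succCountsAfterLast_surjective (hm : 1 ≤ m) :
    Function.Surjective (succCountsAfterLast (m := m) (n := n)) := by
  intro f
  set v : ℕ → ℕ := fun t => if h : t < n - 1 then f ⟨t, h⟩ else 0
  have hv : ∀ t, v t ≤ m := fun t => by
    by_cases h : t < n - 1 <;> simp [v, h, Fin.is_le]
  obtain ⟨W, hW⟩ : ∃ W : List (Fin n), W.map Fin.val = canonicalWord m v n :=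
    CanLift.prf _ (isMPermutation_canonicalWord hv n).1
  refine ⟨⟨W, fun k => ?_⟩, funext fun i => Fin.ext ?_⟩
  · rw [← count_map_of_injective W _ Fin.val_injective, hW, count_canonicalWord hv k.isLt]
  · have hi : i.1 + 1 < n := by omega
    simp [succCountsAfterLast, hW, countSuccAfterLast_canonicalWord hm hv hi, v]

end FinAlphabet

/-- The number of hyposylvester classes of `m`-permutations of `n`
(words over `n` letters in which each letter appears exactly `m` times) is
`(m+1)^(n-1)`. -/
theorem card_hyposylvester_classes_mPermutations (m n : ℕ) (hm : 1 ≤ m) :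
    Nat.card
      (Quotient (Setoid.comap
        (Subtype.val : {w : List (Fin n) // ∀ k, w.count k = m} → List (Fin n))
        (Relation.EqvGen.setoid HypoStep))) = (m + 1) ^ (n - 1) := by
  rw [Nat.card_congr ((Quotient.congrRight (eqvGen_hypoStep_iff_succCountsAfterLast_eq hm)).trans
    (Setoid.quotientKerEquivOfSurjective _ (succCountsAfterLast_surjective hm)))]
  simp
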